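/- arXiv:2311.00944 — 2 statements merged into one kernel-verified Lean document; each statement's English description precedes it below -/
import Mathlib

section
/- Let p = 2l, 0 < η_x ≤ 1/(1000l), and η_y = η_x/256. Fix x, z ∈ ℝ^{d1} and y ∈ Y, and set x' := x − η_x∇_x f̂(x,y,z) and y' := P_Y(y + η_y∇_y f(x,y)). Then f̂(x,y,z) − f̂(x',y',z) + 2(Ψ(y',z) − Ψ(y,z)) ≥ (η_x/8)‖∇_x f̂(x,y,z)‖² + (1/(8η_y))‖y' − y‖². -/
/-! The gradient step in `x` lowers `f̂` by about `η_x ‖∇_x f̂‖²`, and the projection inequality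
`‖y' - y‖² ≤ η_y ⟪∇_y f(x, y), y' - y⟫` makes the ascent step in `y` worth `‖y' - y‖² / η_y`.
The `y`-step changes `f̂(x', ·)` by about `⟪∇_y f(x', y), y' - y⟫`, and since `x*(y')` competes
for `Ψ(y)`, `Ψ(y') - Ψ(y) ≥ ⟪∇_y f(x*(y'), y), y' - y⟫ - l ‖y' - y‖²`. Comparing both `y`-gradients
with `∇_y f(x, y)` costs `l ‖x' - x‖` and `l ‖x*(y') - x‖`, the latter at most
`‖∇_x f̂(x, y)‖ + l ‖y' - y‖` because `∇_x f̂(·, y')` is `l`-strongly monotone and vanishes at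
`x*(y')`; for small steps these errors are absorbed. -/

open Set Metric
open scoped RealInnerProductSpace

noncomputable def gradx {d1 d2 : ℕ}
    (f : EuclideanSpace ℝ (Fin d1) → EuclideanSpace ℝ (Fin d2) → ℝ)
    (x : EuclideanSpace ℝ (Fin d1)) (y : EuclideanSpace ℝ (Fin d2)) :
    EuclideanSpace ℝ (Fin d1) :=
  gradient (fun x' => f x' y) x

noncomputable def grady {d1 d2 : ℕ}
    (f : EuclideanSpace ℝ (Fin d1) → EuclideanSpace ℝ (Fin d2) → ℝ)
    (x : EuclideanSpace ℝ (Fin d1)) (y : EuclideanSpace ℝ (Fin d2)) :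
    EuclideanSpace ℝ (Fin d2) :=
  gradient (fun y' => f x y') y

/-- `f` is differentiable and `l`-smooth: the gradient is `l`-Lipschitz with respect to the
Euclidean norm on the product space (stated in squared form). -/
def IsLSmooth {d1 d2 : ℕ} (l : ℝ)
    (f : EuclideanSpace ℝ (Fin d1) → EuclideanSpace ℝ (Fin d2) → ℝ) : Prop :=
  Differentiable ℝ (fun w : EuclideanSpace ℝ (Fin d1) × EuclideanSpace ℝ (Fin d2) => f w.1 w.2) ∧
  ∀ x₁ x₂ y₁ y₂,
    ‖gradx f x₁ y₁ - gradx f x₂ y₂‖ ^ 2 + ‖grady f x₁ y₁ - grady f x₂ y₂‖ ^ 2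
      ≤ l ^ 2 * (‖x₁ - x₂‖ ^ 2 + ‖y₁ - y₂‖ ^ 2)

/-- `f̂(x, y, z) = f(x, y) + (p/2)‖x − z‖²`. -/
noncomputable def fhat {d1 d2 : ℕ}
    (f : EuclideanSpace ℝ (Fin d1) → EuclideanSpace ℝ (Fin d2) → ℝ) (p : ℝ)
    (x : EuclideanSpace ℝ (Fin d1)) (y : EuclideanSpace ℝ (Fin d2))
    (z : EuclideanSpace ℝ (Fin d1)) : ℝ :=
  f x y + p / 2 * ‖x - z‖ ^ 2

open scoped Gradient

section InnerProductSpace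

variable {E : Type*} [NormedAddCommGroup E] [InnerProductSpace ℝ E]

theorem inner_sub_le_zero_of_forall_norm_sub_le {Y : Set E} (hY : Convex ℝ Y) {v q : E}
    (hq : q ∈ Y) (hmin : ∀ w ∈ Y, ‖v - q‖ ≤ ‖v - w‖) {w : E} (hw : w ∈ Y) :
    ⟪v - q, w - q⟫ ≤ 0 := by
  have : Nonempty Y := ⟨⟨q, hq⟩⟩
  have hinf : ‖v - q‖ = ⨅ w : Y, ‖v - w‖ :=
    le_antisymm (le_ciInf fun w => hmin w w.2)
      (ciInf_le ⟨0, forall_mem_range.2 fun w : Y => norm_nonneg (v - w)⟩ (⟨q, hq⟩ : Y))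
  exact (norm_eq_iInf_iff_real_inner_le_zero hY hq).1 hinf w hw

theorem norm_sub_sq_le_inner_of_forall_norm_sub_le {Y : Set E} (hY : Convex ℝ Y) {y g q : E}
    {η : ℝ} (hy : y ∈ Y) (hq : q ∈ Y) (hmin : ∀ w ∈ Y, ‖y + η • g - q‖ ≤ ‖y + η • g - w‖) :
    ‖q - y‖ ^ 2 ≤ η * ⟪g, q - y⟫ := by
  have h := inner_sub_le_zero_of_forall_norm_sub_le hY hq hmin hy
  have hsplit : y + η • g - q = η • g - (q - y) := by abel
  rw [hsplit, show y - q = -(q - y) by abel, inner_neg_right, inner_sub_left,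
    real_inner_smul_left, real_inner_self_eq_norm_sq] at h
  linarith

theorem mul_norm_le_norm_of_mul_sq_le_inner {m : ℝ} {u d : E} (h : m * ‖d‖ ^ 2 ≤ ⟪u, d⟫) :
    m * ‖d‖ ≤ ‖u‖ := by
  rcases (norm_nonneg d).eq_or_lt with hd | hd
  · rw [← hd, mul_zero]
    exact norm_nonneg u
  · refine le_of_mul_le_mul_right ?_ hd
    calc m * ‖d‖ * ‖d‖ = m * ‖d‖ ^ 2 := by ring
      _ ≤ ⟪u, d⟫ := h
      _ ≤ ‖u‖ * ‖d‖ := real_inner_le_norm u d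

variable [CompleteSpace E]

theorem hasGradientAt_half_mul_norm_sub_sq (p : ℝ) (z u : E) :
    HasGradientAt (fun w => p / 2 * ‖w - z‖ ^ 2) (p • (u - z)) u := by
  rw [hasGradientAt_iff_hasFDerivAt]
  refine ((hasFDerivAt_sub_const z).norm_sq.const_mul (p / 2)).congr_fderiv ?_
  ext v
  simp
  ring

theorem IsLocalMin.hasGradientAt_eq_zero {φ : E → ℝ} {x g : E} (h : IsLocalMin φ x)
    (hg : HasGradientAt φ g x) : g = 0 := by
  simpa using h.hasFDerivAt_eq_zero hg

/-- The mean value inequality gives the constant `C` here, not the sharp `C / 2`. -/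
theorem abs_sub_sub_inner_gradient_le {φ : E → ℝ} (hφ : Differentiable ℝ φ) {C : ℝ} (hC : 0 ≤ C)
    (hlip : ∀ u v, ‖∇ φ u - ∇ φ v‖ ≤ C * ‖u - v‖) (u v : E) :
    |φ v - φ u - ⟪∇ φ u, v - u⟫| ≤ C * ‖v - u‖ ^ 2 := by
  have hbound : ∀ w ∈ closedBall u ‖v - u‖, ‖fderiv ℝ φ w - fderiv ℝ φ u‖ ≤ C * ‖v - u‖ := by
    intro w hw
    rw [← toDual_gradient, ← toDual_gradient, ← map_sub, LinearIsometryEquiv.norm_map]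
    exact (hlip w u).trans
      (mul_le_mul_of_nonneg_left (by simpa [dist_eq_norm] using hw) hC)
  have h := (convex_closedBall u ‖v - u‖).norm_image_sub_le_of_norm_hasFDerivWithin_le'
    (x := u) (y := v) (fun w _ => (hφ w).hasFDerivAt.hasFDerivWithinAt) hbound
    (mem_closedBall_self (norm_nonneg _)) (by simp [dist_eq_norm])
  rw [← inner_gradient_left] at h
  rw [← Real.norm_eq_abs, sq, ← mul_assoc]
  exact h

/-- The gradient of the proximal objective is `(p - C)`-strongly monotone and vanishes at `xs`. -/
theorem IsLocalMin.sub_mul_norm_sub_le_norm_gradient {φ : E → ℝ} (hφ : Differentiable ℝ φ)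
    {C : ℝ} (hlip : ∀ u v, ‖∇ φ u - ∇ φ v‖ ≤ C * ‖u - v‖) {p : ℝ} {z xs : E}
    (hmin : IsLocalMin (fun w => φ w + p / 2 * ‖w - z‖ ^ 2) xs) (x : E) :
    (p - C) * ‖x - xs‖ ≤ ‖∇ φ x + p • (x - z)‖ := by
  have hstat : ∇ φ xs + p • (xs - z) = 0 := by
    have hgrad := (hφ xs).hasFDerivAt.add (hasGradientAt_half_mul_norm_sub_sq p z xs).hasFDerivAt
    rw [← toDual_gradient, ← map_add] at hgrad
    exact hmin.hasGradientAt_eq_zero hgrad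
  have hsplit : ∇ φ x + p • (x - z) = (∇ φ x - ∇ φ xs) + p • (x - xs) := by
    linear_combination (norm := module) hstat
  apply mul_norm_le_norm_of_mul_sq_le_inner
  have hcs : -(C * ‖x - xs‖ * ‖x - xs‖) ≤ ⟪∇ φ x - ∇ φ xs, x - xs⟫ := by
    have := (abs_le.1 (abs_real_inner_le_norm (∇ φ x - ∇ φ xs) (x - xs))).1
    nlinarith [mul_le_mul_of_nonneg_right (hlip x xs) (norm_nonneg (x - xs))]
  rw [hsplit, inner_add_left, real_inner_smul_left, real_inner_self_eq_norm_sq]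
  nlinarith [hcs]

end InnerProductSpace

/-- With `l η ≤ 1/1000` the error terms of one step are absorbed by the progress terms `η a²` and
`I ≥ 256 b² / η`, using AM-GM on the cross terms `a b`. -/
theorem step_size_budget {l η a b I : ℝ} (hη : 0 < η) (hlη : l * η ≤ 1 / 1000) (ha : 0 ≤ a)
    (hb : 0 ≤ b) (hI : b ^ 2 ≤ η / 256 * I) :
    η / 8 * a ^ 2 + 1 / (8 * (η / 256)) * b ^ 2
        + 2 * l * η ^ 2 * a ^ 2 + l * η * a * b + 2 * a * b + 5 * l * b ^ 2
      ≤ η * a ^ 2 + I := by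
  have hcoef : η * (1 / (8 * (η / 256))) = 32 := by field_simp; norm_num
  refine le_of_mul_le_mul_left ?_ hη
  have hab : 0 ≤ η * a * b := by positivity
  nlinarith [mul_le_mul_of_nonneg_right hlη (by positivity : 0 ≤ 2 * η ^ 2 * a ^ 2),
    mul_le_mul_of_nonneg_right hlη hab, mul_le_mul_of_nonneg_right hlη (sq_nonneg b),
    sq_nonneg (η * a - 2 * b)]

namespace IsLSmooth

variable {d1 d2 : ℕ} {l : ℝ} {f : EuclideanSpace ℝ (Fin d1) → EuclideanSpace ℝ (Fin d2) → ℝ}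

theorem differentiable_left (hf : IsLSmooth l f) (y : EuclideanSpace ℝ (Fin d2)) :
    Differentiable ℝ (fun x => f x y) :=
  hf.1.comp (differentiable_id.prodMk (differentiable_const y))

theorem differentiable_right (hf : IsLSmooth l f) (x : EuclideanSpace ℝ (Fin d1)) :
    Differentiable ℝ (fun y => f x y) :=
  hf.1.comp ((differentiable_const x).prodMk differentiable_id)

theorem norm_gradx_sub_le_fst (hf : IsLSmooth l f) (hl : 0 ≤ l)
    (x₁ x₂ : EuclideanSpace ℝ (Fin d1)) (y : EuclideanSpace ℝ (Fin d2)) :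
    ‖gradx f x₁ y - gradx f x₂ y‖ ≤ l * ‖x₁ - x₂‖ := by
  have h := hf.2 x₁ x₂ y y
  rw [sub_self, norm_zero] at h
  refine (pow_le_pow_iff_left₀ (norm_nonneg _) (by positivity) two_ne_zero).1 ?_
  nlinarith [sq_nonneg ‖grady f x₁ y - grady f x₂ y‖]

theorem norm_gradx_sub_le_snd (hf : IsLSmooth l f) (hl : 0 ≤ l)
    (x : EuclideanSpace ℝ (Fin d1)) (y₁ y₂ : EuclideanSpace ℝ (Fin d2)) :
    ‖gradx f x y₁ - gradx f x y₂‖ ≤ l * ‖y₁ - y₂‖ := by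
  have h := hf.2 x x y₁ y₂
  rw [sub_self, norm_zero] at h
  refine (pow_le_pow_iff_left₀ (norm_nonneg _) (by positivity) two_ne_zero).1 ?_
  nlinarith [sq_nonneg ‖grady f x y₁ - grady f x y₂‖]

theorem norm_grady_sub_le_fst (hf : IsLSmooth l f) (hl : 0 ≤ l)
    (x₁ x₂ : EuclideanSpace ℝ (Fin d1)) (y : EuclideanSpace ℝ (Fin d2)) :
    ‖grady f x₁ y - grady f x₂ y‖ ≤ l * ‖x₁ - x₂‖ := by
  have h := hf.2 x₁ x₂ y y
  rw [sub_self, norm_zero] at h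
  refine (pow_le_pow_iff_left₀ (norm_nonneg _) (by positivity) two_ne_zero).1 ?_
  nlinarith [sq_nonneg ‖gradx f x₁ y - gradx f x₂ y‖]

theorem norm_grady_sub_le_snd (hf : IsLSmooth l f) (hl : 0 ≤ l)
    (x : EuclideanSpace ℝ (Fin d1)) (y₁ y₂ : EuclideanSpace ℝ (Fin d2)) :
    ‖grady f x y₁ - grady f x y₂‖ ≤ l * ‖y₁ - y₂‖ := by
  have h := hf.2 x x y₁ y₂
  rw [sub_self, norm_zero] at h
  refine (pow_le_pow_iff_left₀ (norm_nonneg _) (by positivity) two_ne_zero).1 ?_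
  nlinarith [sq_nonneg ‖gradx f x y₁ - gradx f x y₂‖]

theorem abs_inner_grady_sub_le (hf : IsLSmooth l f) (hl : 0 ≤ l)
    (x₁ x₂ : EuclideanSpace ℝ (Fin d1)) (y w : EuclideanSpace ℝ (Fin d2)) :
    |⟪grady f x₁ y, w⟫ - ⟪grady f x₂ y, w⟫| ≤ l * ‖x₁ - x₂‖ * ‖w‖ := by
  rw [← inner_sub_left]
  exact (abs_real_inner_le_norm _ _).trans
    (mul_le_mul_of_nonneg_right (hf.norm_grady_sub_le_fst hl x₁ x₂ y) (norm_nonneg w))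

theorem abs_fhat_sub_fhat_sub_inner_grady_le (hf : IsLSmooth l f) (hl : 0 ≤ l) (p : ℝ)
    (x z : EuclideanSpace ℝ (Fin d1)) (y y' : EuclideanSpace ℝ (Fin d2)) :
    |fhat f p x y' z - fhat f p x y z - ⟪grady f x y, y' - y⟫| ≤ l * ‖y' - y‖ ^ 2 := by
  have h := abs_sub_sub_inner_gradient_le (hf.differentiable_right x) hl
    (hf.norm_grady_sub_le_snd hl x) y y'
  simpa only [fhat, grady, add_sub_add_right_eq_sub] using h

theorem fhat_gradient_step_le (hf : IsLSmooth l f) (hl : 0 ≤ l) (p η : ℝ)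
    (x z : EuclideanSpace ℝ (Fin d1)) (y : EuclideanSpace ℝ (Fin d2)) :
    fhat f p (x - η • (gradx f x y + p • (x - z))) y z
      ≤ fhat f p x y z - η * ‖gradx f x y + p • (x - z)‖ ^ 2
        + (l + p / 2) * η ^ 2 * ‖gradx f x y + p • (x - z)‖ ^ 2 := by
  set g := gradx f x y + p • (x - z) with hg
  have hdescent : f (x - η • g) y - f x y - ⟪gradx f x y, x - η • g - x⟫
      ≤ l * ‖x - η • g - x‖ ^ 2 :=
    (abs_le.1 (abs_sub_sub_inner_gradient_le (hf.differentiable_left y) hl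
      (fun u v => hf.norm_gradx_sub_le_fst hl u v y) x (x - η • g))).2
  have hstep : ‖x - η • g - x‖ ^ 2 = η ^ 2 * ‖g‖ ^ 2 := by
    rw [sub_sub_cancel_left, norm_neg, norm_smul, mul_pow, Real.norm_eq_abs, sq_abs]
  have hquad : ‖x - η • g - z‖ ^ 2 = ‖x - z‖ ^ 2 - 2 * η * ⟪x - z, g⟫ + η ^ 2 * ‖g‖ ^ 2 := by
    rw [show x - η • g - z = (x - z) - η • g by abel, norm_sub_sq_real, real_inner_smul_right,
      norm_smul, mul_pow, Real.norm_eq_abs, sq_abs]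
    ring
  have hg_sq : ‖g‖ ^ 2 = ⟪gradx f x y, g⟫ + p * ⟪x - z, g⟫ := by
    rw [← real_inner_self_eq_norm_sq]
    nth_rewrite 1 [hg]
    rw [inner_add_left, real_inner_smul_left]
  rw [hstep, sub_sub_cancel_left, inner_neg_right, real_inner_smul_right] at hdescent
  simp only [fhat]
  rw [hquad]
  linear_combination hdescent + η * hg_sq

theorem sub_mul_norm_sub_le_of_forall_le (hf : IsLSmooth l f) (hl : 0 ≤ l) {p : ℝ}
    {xs z : EuclideanSpace ℝ (Fin d1)} {y : EuclideanSpace ℝ (Fin d2)}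
    (hmin : ∀ w, fhat f p xs y z ≤ fhat f p w y z) (x : EuclideanSpace ℝ (Fin d1)) :
    (p - l) * ‖x - xs‖ ≤ ‖gradx f x y + p • (x - z)‖ :=
  IsLocalMin.sub_mul_norm_sub_le_norm_gradient (hf.differentiable_left y)
    (fun u v => hf.norm_gradx_sub_le_fst hl u v y) (Filter.Eventually.of_forall hmin) x

end IsLSmooth

theorem statement12_general {d1 d2 : ℕ} (l ηx ηy : ℝ) (hl : 0 < l)
    (hηx : 0 < ηx) (hηx' : ηx ≤ 1 / (1000 * l)) (hηy : ηy = ηx / 256)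
    (f : EuclideanSpace ℝ (Fin d1) → EuclideanSpace ℝ (Fin d2) → ℝ)
    (hf : IsLSmooth l f)
    (Y : Set (EuclideanSpace ℝ (Fin d2)))
    (hYconv : Convex ℝ Y)
    (projY : EuclideanSpace ℝ (Fin d2) → EuclideanSpace ℝ (Fin d2))
    (hprojY_mem : ∀ v, projY v ∈ Y)
    (hprojY : ∀ v, ∀ w ∈ Y, ‖v - projY v‖ ≤ ‖v - w‖)
    (xstar : EuclideanSpace ℝ (Fin d2) → EuclideanSpace ℝ (Fin d1) → EuclideanSpace ℝ (Fin d1))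
    (hxstar : ∀ y z x, fhat f (2 * l) (xstar y z) y z ≤ fhat f (2 * l) x y z)
    (x z : EuclideanSpace ℝ (Fin d1)) (y : EuclideanSpace ℝ (Fin d2)) (hy : y ∈ Y)
    (x' : EuclideanSpace ℝ (Fin d1))
    (hx' : x' = x - ηx • (gradx f x y + (2 * l) • (x - z)))
    (y' : EuclideanSpace ℝ (Fin d2))
    (hy' : y' = projY (y + ηy • grady f x y)) :
    fhat f (2 * l) x y z - fhat f (2 * l) x' y' z
        + 2 * (fhat f (2 * l) (xstar y' z) y' z - fhat f (2 * l) (xstar y z) y z)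
      ≥ ηx / 8 * ‖gradx f x y + (2 * l) • (x - z)‖ ^ 2
        + 1 / (8 * ηy) * ‖y' - y‖ ^ 2 := by
  subst hx' hy' hηy
  set g := gradx f x y + (2 * l) • (x - z) with hg
  set y' := projY (y + (ηx / 256) • grady f x y)
  set xs := xstar y' z
  have hl0 : 0 ≤ l := hl.le
  have hlηx : l * ηx ≤ 1 / 1000 := by
    rw [le_div_iff₀ (by positivity)] at hηx'
    linarith
  have hx_step := hf.fhat_gradient_step_le hl0 (2 * l) ηx x z y
  have hy_step :=
    abs_le.1 (hf.abs_fhat_sub_fhat_sub_inner_grady_le hl0 (2 * l) (x - ηx • g) z y y')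
  have hΨ_step := abs_le.1 (hf.abs_fhat_sub_fhat_sub_inner_grady_le hl0 (2 * l) xs z y y')
  have hΨ_min := hxstar y z xs
  have hproj : ‖y' - y‖ ^ 2 ≤ ηx / 256 * ⟪grady f x y, y' - y⟫ :=
    norm_sub_sq_le_inner_of_forall_norm_sub_le hYconv hy (hprojY_mem _) (hprojY _)
  have hx_dist : ‖x - ηx • g - x‖ = ηx * ‖g‖ := by
    rw [sub_sub_cancel_left, norm_neg, norm_smul, Real.norm_of_nonneg hηx.le]
  have hxs_dist : l * ‖xs - x‖ ≤ ‖g‖ + l * ‖y' - y‖ := by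
    have hprox := hf.sub_mul_norm_sub_le_of_forall_le hl0 (hxstar y' z) x
    have hshift : ‖gradx f x y' + (2 * l) • (x - z)‖ ≤ ‖g‖ + l * ‖y' - y‖ := by
      rw [show gradx f x y' + (2 * l) • (x - z) = g + (gradx f x y' - gradx f x y) by
        rw [hg]; abel]
      exact (norm_add_le _ _).trans (add_le_add le_rfl (hf.norm_gradx_sub_le_snd hl0 x y' y))
    rw [norm_sub_rev]
    linarith
  have hI₁ := abs_le.1 (hf.abs_inner_grady_sub_le hl0 (x - ηx • g) x y (y' - y))
  have hI₂ := abs_le.1 (hf.abs_inner_grady_sub_le hl0 xs x y (y' - y))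
  rw [hx_dist] at hI₁
  have hI₂' := mul_le_mul_of_nonneg_right hxs_dist (norm_nonneg (y' - y))
  have hbudget := step_size_budget hηx hlηx (norm_nonneg g) (norm_nonneg (y' - y)) hproj
  linarith

/-- joint descent of `f̂ − 2Ψ`, constrained case: with `p = 2l`,
`0 < η_x ≤ 1/(1000l)`, `η_y = η_x/256`, `x' = x − η_x ∇_x f̂(x,y,z)`,
`y' = P_Y(y + η_y ∇_y f(x,y))`,
`f̂(x,y,z) − f̂(x',y',z) + 2(Ψ(y',z) − Ψ(y,z)) ≥ (η_x/8)‖∇_x f̂(x,y,z)‖² + (1/(8η_y))‖y' − y‖²`. -/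
theorem statement12 {d1 d2 : ℕ} (l ηx ηy : ℝ) (hl : 0 < l)
    (hηx : 0 < ηx) (hηx' : ηx ≤ 1 / (1000 * l)) (hηy : ηy = ηx / 256)
    (f : EuclideanSpace ℝ (Fin d1) → EuclideanSpace ℝ (Fin d2) → ℝ)
    (hf : IsLSmooth l f)
    (Y : Set (EuclideanSpace ℝ (Fin d2))) (hYne : Y.Nonempty) (hYcl : IsClosed Y)
    (hYconv : Convex ℝ Y)
    (projY : EuclideanSpace ℝ (Fin d2) → EuclideanSpace ℝ (Fin d2))
    (hprojY_mem : ∀ v, projY v ∈ Y)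
    (hprojY : ∀ v, ∀ w ∈ Y, ‖v - projY v‖ ≤ ‖v - w‖)
    (xstar : EuclideanSpace ℝ (Fin d2) → EuclideanSpace ℝ (Fin d1) → EuclideanSpace ℝ (Fin d1))
    (hxstar : ∀ y z x, fhat f (2 * l) (xstar y z) y z ≤ fhat f (2 * l) x y z)
    (x z : EuclideanSpace ℝ (Fin d1)) (y : EuclideanSpace ℝ (Fin d2)) (hy : y ∈ Y)
    (x' : EuclideanSpace ℝ (Fin d1))
    (hx' : x' = x - ηx • (gradx f x y + (2 * l) • (x - z)))
    (y' : EuclideanSpace ℝ (Fin d2))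
    (hy' : y' = projY (y + ηy • grady f x y)) :
    fhat f (2 * l) x y z - fhat f (2 * l) x' y' z
        + 2 * (fhat f (2 * l) (xstar y' z) y' z - fhat f (2 * l) (xstar y z) y z)
      ≥ ηx / 8 * ‖gradx f x y + (2 * l) • (x - z)‖ ^ 2
        + 1 / (8 * ηy) * ‖y' - y‖ ^ 2 :=
  statement12_general l ηx ηy hl hηx hηx' hηy f hf Y hYconv projY hprojY_mem hprojY xstar hxstar x z
    y hy x' hx' y' hy'
end

section
/- Let p = 2l, 0 < η_x ≤ 1/(1000l), η_y = η_x/256, and 0 < β ≤ η_y·l/80000. Given x, z ∈ ℝ^{d1} and y ∈ ℝ^{d2}, set x' := x − η_x(∇_x f(x,y) + p(x − z)), y' := y + η_y∇_y f(x,y), z' := z + β(x' − z). Then V(x,y,z) − V(x',y',z') ≥ (η_x/32)‖∇_x f̂(x,y,z)‖² + (η_y/32)‖∇_y f(x,y)‖² + (pβ/16)‖x − z‖² − 24pβ‖x*(z) − x*(y,z)‖². -/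
open Set Metric
open scoped RealInnerProductSpace

/-!
Split `V(x,y,z) − V(x',y',z')` into the effect of the `(x, y)`-step at fixed `z` and that of the
`z`-step. With `p = 2l`, `f̂(·, y, z)` is `l`-strongly convex and `(3l)`-smooth, so its minimizer
`x*(y, z)` has zero gradient and satisfies the error bound `l‖x − x*(y,z)‖ ≤ ‖∇ₓf̂(x,y,z)‖`;
consequently `x*(·, z)` is `1`-Lipschitz and `x*(y, ·)` is `2`-Lipschitz.
For the `(x, y)`-step the descent lemma for `f` gives the primal decrease of `f̂`, and
`Ψ(y', z) − Ψ(y, z) ≥ f(x*(y',z), y') − f(x*(y',z), y)` is an ascent step on `f(x*(y',z), ·)`,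
whose gradient differs from `∇_y f(x, y)` by at most `l‖x*(y',z) − x‖`.
For the `z`-step only the term `(p/2)‖x − z‖²` depends on `z`: `Ψ(y', ·)` and `P = min Φ` change by
inner products with `z − z'`, which combine to `2p⟪x*(y',z') − x*(z), z − z'⟫`, and
`‖x*(y',z') − x*(z)‖` is compared to `‖x*(y,z) − x*(z)‖` through the Lipschitz bounds.
The step-size conditions make the positive terms dominate all error terms.
-/

theorem abs_sub_sub_deriv_le_of_abs_deriv_sub_le {φ φ' : ℝ → ℝ} {C : ℝ}
    (hφ : ∀ t, HasDerivAt φ (φ' t) t) (hC : ∀ t ∈ Icc (0 : ℝ) 1, |φ' t - φ' 0| ≤ C * t) :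
    |φ 1 - φ 0 - φ' 0| ≤ C / 2 := by
  have hrem : ∀ t, HasDerivAt (fun t => φ t - φ 0 - t * φ' 0) (φ' t - φ' 0) t := fun t =>
    ((hφ t).sub_const (φ 0)).sub (hasDerivAt_mul_const (φ' 0))
  have hbound : ∀ t, HasDerivAt (fun t => C * t ^ 2 / 2) (C * t) t := fun t => by
    simpa [mul_comm, mul_div_assoc] using ((hasDerivAt_pow 2 t).const_mul C).div_const 2
  have := image_norm_le_of_norm_deriv_right_le_deriv_boundary
    (fun t _ => (hrem t).continuousAt.continuousWithinAt) (fun t _ => (hrem t).hasDerivWithinAt)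
    (by simp) hbound (fun t ht => hC t (Ico_subset_Icc_self ht)) (right_mem_Icc.2 zero_le_one)
  simpa using this

theorem mul_add_mul_le_of_sq_add_sq_le {a b c d m : ℝ} (hm : 0 ≤ m)
    (h : a ^ 2 + b ^ 2 ≤ m ^ 2 * (c ^ 2 + d ^ 2)) : a * c + b * d ≤ m * (c ^ 2 + d ^ 2) := by
  refine le_of_pow_le_pow_left₀ two_ne_zero (by positivity) ?_
  nlinarith [sq_nonneg (a * d - b * c), sq_nonneg c, sq_nonneg d]

section Smooth

variable {d1 d2 : ℕ} {f : EuclideanSpace ℝ (Fin d1) → EuclideanSpace ℝ (Fin d2) → ℝ} {l p : ℝ}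

theorem hasDerivAt_along_line
    (hf : Differentiable ℝ fun w : EuclideanSpace ℝ (Fin d1) × EuclideanSpace ℝ (Fin d2) => f w.1 w.2)
    (x u : EuclideanSpace ℝ (Fin d1)) (y v : EuclideanSpace ℝ (Fin d2)) (t : ℝ) :
    HasDerivAt (fun t : ℝ => f (x + t • u) (y + t • v))
      (⟪gradx f (x + t • u) (y + t • v), u⟫ + ⟪grady f (x + t • u) (y + t • v), v⟫) t := by
  set L := fderiv ℝ (fun w => f w.1 w.2) (x + t • u, y + t • v)
  have hw : HasFDerivAt (fun w => f w.1 w.2) L (x + t • u, y + t • v) := (hf _).hasFDerivAt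
  have hline : HasDerivAt (fun s : ℝ => (x + s • u, y + s • v)) (u, v) t := by
    convert (((hasDerivAt_id t).smul_const u).const_add x).prodMk
      (((hasDerivAt_id t).smul_const v).const_add y) using 1 <;> simp
  have hx : HasFDerivAt (fun x' => f x' (y + t • v)) (L.comp (.inl ℝ _ _)) (x + t • u) :=
    (hw.comp (x + t • u) (hasFDerivAt_prodMk_left (𝕜 := ℝ) (x + t • u) (y + t • v)) :)
  have hy : HasFDerivAt (fun y' => f (x + t • u) y') (L.comp (.inr ℝ _ _)) (y + t • v) :=
    hw.comp (y + t • v) (hasFDerivAt_prodMk_right (𝕜 := ℝ) _ _)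
  rw [gradx, grady, hx.hasGradientAt.gradient, hy.hasGradientAt.gradient,
    InnerProductSpace.toDual_symm_apply, InnerProductSpace.toDual_symm_apply]
  refine (hw.comp_hasDerivAt t hline).congr_deriv ?_
  simp [← map_add]

theorem IsLSmooth.abs_sub_sub_inner_le (hf : IsLSmooth l f) (hl : 0 ≤ l)
    (x₁ x₂ : EuclideanSpace ℝ (Fin d1)) (y₁ y₂ : EuclideanSpace ℝ (Fin d2)) :
    |f x₂ y₂ - f x₁ y₁ - ⟪gradx f x₁ y₁, x₂ - x₁⟫ - ⟪grady f x₁ y₁, y₂ - y₁⟫|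
      ≤ l / 2 * (‖x₂ - x₁‖ ^ 2 + ‖y₂ - y₁‖ ^ 2) := by
  set u := x₂ - x₁
  set v := y₂ - y₁
  have key := abs_sub_sub_deriv_le_of_abs_deriv_sub_le (hasDerivAt_along_line hf.1 x₁ u y₁ v)
    (C := l * (‖u‖ ^ 2 + ‖v‖ ^ 2)) fun t ht => ?_
  · simpa [u, v, sub_sub, add_assoc, mul_div_right_comm] using key
  set Δx := gradx f (x₁ + t • u) (y₁ + t • v) - gradx f x₁ y₁
  set Δy := grady f (x₁ + t • u) (y₁ + t • v) - grady f x₁ y₁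
  have hlip : ‖Δx‖ ^ 2 + ‖Δy‖ ^ 2 ≤ (l * t) ^ 2 * (‖u‖ ^ 2 + ‖v‖ ^ 2) := by
    have := hf.2 (x₁ + t • u) x₁ (y₁ + t • v) y₁
    simp only [add_sub_cancel_left, norm_smul, Real.norm_of_nonneg ht.1] at this
    linarith
  rw [zero_smul, zero_smul, add_zero, add_zero, add_sub_add_comm, ← inner_sub_left,
    ← inner_sub_left]
  calc |⟪Δx, u⟫ + ⟪Δy, v⟫| ≤ ‖Δx‖ * ‖u‖ + ‖Δy‖ * ‖v‖ :=
      (abs_add_le _ _).trans (add_le_add (abs_real_inner_le_norm _ _) (abs_real_inner_le_norm _ _))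
    _ ≤ l * t * (‖u‖ ^ 2 + ‖v‖ ^ 2) :=
      mul_add_mul_le_of_sq_add_sq_le (mul_nonneg hl ht.1) hlip
    _ = l * (‖u‖ ^ 2 + ‖v‖ ^ 2) * t := by ring

theorem IsLSmooth.norm_grady_sub_le (hf : IsLSmooth l f) (hl : 0 ≤ l)
    (x₁ x₂ : EuclideanSpace ℝ (Fin d1)) (y : EuclideanSpace ℝ (Fin d2)) :
    ‖grady f x₁ y - grady f x₂ y‖ ≤ l * ‖x₁ - x₂‖ := by
  refine le_of_pow_le_pow_left₀ two_ne_zero (by positivity) ?_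
  have := hf.2 x₁ x₂ y y
  simp only [sub_self, norm_zero] at this
  nlinarith [sq_nonneg ‖gradx f x₁ y - gradx f x₂ y‖]

theorem IsLSmooth.norm_gradx_sub_le (hf : IsLSmooth l f) (hl : 0 ≤ l)
    (x : EuclideanSpace ℝ (Fin d1)) (y₁ y₂ : EuclideanSpace ℝ (Fin d2)) :
    ‖gradx f x y₁ - gradx f x y₂‖ ≤ l * ‖y₁ - y₂‖ := by
  refine le_of_pow_le_pow_left₀ two_ne_zero (by positivity) ?_
  have := hf.2 x x y₁ y₂
  simp only [sub_self, norm_zero] at this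
  nlinarith [sq_nonneg ‖grady f x y₁ - grady f x y₂‖]

theorem fhat_center_sub (x z z' : EuclideanSpace ℝ (Fin d1)) (y : EuclideanSpace ℝ (Fin d2)) :
    fhat f p x y z' - fhat f p x y z = p * ⟪x - z, z - z'⟫ + p / 2 * ‖z - z'‖ ^ 2 := by
  rw [fhat, fhat, show x - z' = (x - z) + (z - z') by abel, norm_add_sq_real]
  ring

theorem fhat_center_step (x z : EuclideanSpace ℝ (Fin d1)) (y : EuclideanSpace ℝ (Fin d2))
    (β : ℝ) : fhat f p x y (z + β • (x - z)) = f x y + p / 2 * (1 - β) ^ 2 * ‖x - z‖ ^ 2 := by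
  rw [fhat, show x - (z + β • (x - z)) = (1 - β) • (x - z) by module, norm_smul,
    Real.norm_eq_abs, mul_pow, sq_abs, mul_assoc]

theorem IsLSmooth.abs_fhat_sub_sub_le (hf : IsLSmooth l f) (hl : 0 ≤ l)
    (x₁ x₂ z : EuclideanSpace ℝ (Fin d1)) (y₁ y₂ : EuclideanSpace ℝ (Fin d2)) :
    |fhat f p x₂ y₂ z - fhat f p x₁ y₁ z - ⟪gradx f x₁ y₁ + p • (x₁ - z), x₂ - x₁⟫
        - ⟪grady f x₁ y₁, y₂ - y₁⟫ - p / 2 * ‖x₂ - x₁‖ ^ 2|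
      ≤ l / 2 * (‖x₂ - x₁‖ ^ 2 + ‖y₂ - y₁‖ ^ 2) := by
  have hsq := norm_add_sq_real (x₁ - z) (x₂ - x₁)
  rw [show x₁ - z + (x₂ - x₁) = x₂ - z by abel] at hsq
  convert hf.abs_sub_sub_inner_le hl x₁ x₂ y₁ y₂ using 2
  rw [fhat, fhat, hsq, inner_add_left, real_inner_smul_left]
  ring

theorem IsLSmooth.le_fhat (hf : IsLSmooth l f) (hl : 0 ≤ l)
    (x₁ x₂ z : EuclideanSpace ℝ (Fin d1)) (y : EuclideanSpace ℝ (Fin d2)) :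
    fhat f p x₁ y z + ⟪gradx f x₁ y + p • (x₁ - z), x₂ - x₁⟫ + (p - l) / 2 * ‖x₂ - x₁‖ ^ 2
      ≤ fhat f p x₂ y z := by
  have := (abs_le.1 (hf.abs_fhat_sub_sub_le (p := p) hl x₁ x₂ z y y)).1
  simp only [sub_self, inner_zero_right, norm_zero] at this
  linarith

theorem IsLSmooth.fhat_le (hf : IsLSmooth l f) (hl : 0 ≤ l)
    (x₁ x₂ z : EuclideanSpace ℝ (Fin d1)) (y : EuclideanSpace ℝ (Fin d2)) :
    fhat f p x₂ y z
      ≤ fhat f p x₁ y z + ⟪gradx f x₁ y + p • (x₁ - z), x₂ - x₁⟫ + (p + l) / 2 * ‖x₂ - x₁‖ ^ 2 := by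
  have := (abs_le.1 (hf.abs_fhat_sub_sub_le (p := p) hl x₁ x₂ z y y)).2
  simp only [sub_self, inner_zero_right, norm_zero] at this
  linarith

theorem IsLSmooth.fhat_primal_dual_step_le (hf : IsLSmooth l f) (hl : 0 ≤ l)
    (x z : EuclideanSpace ℝ (Fin d1)) (y : EuclideanSpace ℝ (Fin d2)) (ηx ηy : ℝ) :
    fhat f p (x - ηx • (gradx f x y + p • (x - z))) (y + ηy • grady f x y) z
      ≤ fhat f p x y z - ηx * ‖gradx f x y + p • (x - z)‖ ^ 2 + ηy * ‖grady f x y‖ ^ 2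
        + (p + l) / 2 * ηx ^ 2 * ‖gradx f x y + p • (x - z)‖ ^ 2
        + l / 2 * ηy ^ 2 * ‖grady f x y‖ ^ 2 := by
  have := (abs_le.1 (hf.abs_fhat_sub_sub_le (p := p) hl x
    (x - ηx • (gradx f x y + p • (x - z))) z y (y + ηy • grady f x y))).2
  simp only [sub_sub_cancel_left, add_sub_cancel_left, inner_neg_right, real_inner_smul_right,
    real_inner_self_eq_norm_sq, norm_neg, norm_smul, Real.norm_eq_abs, mul_pow, sq_abs] at this
  linarith

theorem fhat_isLUB_center_le {w z' : EuclideanSpace ℝ (Fin d1)} {s s' : ℝ}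
    (h : IsLUB (range fun y => fhat f p w y z) s) (h' : IsLUB (range fun y => fhat f p w y z') s') :
    s' ≤ s + (p * ⟪w - z, z - z'⟫ + p / 2 * ‖z - z'‖ ^ 2) := by
  refine h'.2 ?_
  rintro _ ⟨y, rfl⟩
  have := fhat_center_sub (f := f) (p := p) w z z' y
  linarith [h.1 ⟨y, rfl⟩]

variable {a b z : EuclideanSpace ℝ (Fin d1)} {y : EuclideanSpace ℝ (Fin d2)}

theorem IsLSmooth.gradx_fhat_eq_zero_of_isMin (hf : IsLSmooth l f) (hl : 0 ≤ l) (hpl : 0 < p + l)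
    (ha : ∀ x, fhat f p a y z ≤ fhat f p x y z) : gradx f a y + p • (a - z) = 0 := by
  set G := gradx f a y + p • (a - z)
  have hstep := hf.fhat_le (p := p) hl a (a - (p + l)⁻¹ • G) z y
  rw [sub_sub_cancel_left, inner_neg_right, real_inner_smul_right, real_inner_self_eq_norm_sq,
    norm_neg, norm_smul, Real.norm_of_nonneg (inv_nonneg.2 hpl.le)] at hstep
  have hquad : (p + l) / 2 * ((p + l)⁻¹ * ‖G‖) ^ 2 = (p + l)⁻¹ * ‖G‖ ^ 2 / 2 := by
    field_simp
  have hG : (p + l)⁻¹ * ‖G‖ ^ 2 ≤ 0 := by linarith [ha (a - (p + l)⁻¹ • G)]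
  rw [← norm_eq_zero, ← sq_eq_zero_iff]
  exact le_antisymm (nonpos_of_mul_nonpos_right hG (inv_pos.2 hpl)) (sq_nonneg _)

theorem IsLSmooth.mul_norm_sub_le_norm_gradx_fhat (hf : IsLSmooth l f) (hl : 0 ≤ l) (hlp : l < p)
    (ha : ∀ x, fhat f p a y z ≤ fhat f p x y z) (x : EuclideanSpace ℝ (Fin d1)) :
    (p - l) * ‖x - a‖ ≤ ‖gradx f x y + p • (x - z)‖ := by
  have hfrom := hf.le_fhat (p := p) hl a x z y
  rw [hf.gradx_fhat_eq_zero_of_isMin hl (by linarith) ha, inner_zero_left] at hfrom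
  have hto := hf.le_fhat (p := p) hl x a z y
  have hcs := real_inner_le_norm (gradx f x y + p • (x - z)) (x - a)
  rw [← neg_sub x a, inner_neg_right, norm_neg] at hto
  rcases (norm_nonneg (x - a)).eq_or_lt with h0 | hpos
  · rw [← h0, mul_zero]; positivity
  · refine le_of_mul_le_mul_right ?_ hpos
    nlinarith

theorem IsLSmooth.mul_norm_sub_argmin_le_dual (hf : IsLSmooth l f) (hl : 0 ≤ l) (hlp : l < p)
    {y' : EuclideanSpace ℝ (Fin d2)} (ha : ∀ x, fhat f p a y z ≤ fhat f p x y z)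
    (hb : ∀ x, fhat f p b y' z ≤ fhat f p x y' z) :
    (p - l) * ‖a - b‖ ≤ l * ‖y - y'‖ :=
  calc (p - l) * ‖a - b‖ ≤ ‖gradx f a y' + p • (a - z)‖ :=
        hf.mul_norm_sub_le_norm_gradx_fhat hl hlp hb a
    _ = ‖gradx f a y' - gradx f a y‖ := by
        rw [← sub_zero (gradx f a y' + _), ← hf.gradx_fhat_eq_zero_of_isMin hl (by linarith) ha,
          add_sub_add_right_eq_sub]
    _ ≤ l * ‖y - y'‖ := by rw [norm_sub_rev y]; exact hf.norm_gradx_sub_le hl a y' y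

theorem IsLSmooth.mul_norm_sub_argmin_le_center (hf : IsLSmooth l f) (hl : 0 ≤ l) (hlp : l < p)
    {z' : EuclideanSpace ℝ (Fin d1)} (ha : ∀ x, fhat f p a y z ≤ fhat f p x y z)
    (hb : ∀ x, fhat f p b y z' ≤ fhat f p x y z') :
    (p - l) * ‖a - b‖ ≤ p * ‖z - z'‖ :=
  calc (p - l) * ‖a - b‖ ≤ ‖gradx f a y + p • (a - z')‖ :=
        hf.mul_norm_sub_le_norm_gradx_fhat hl hlp hb a
    _ = ‖p • (z - z')‖ := by
        rw [← sub_zero (gradx f a y + _), ← hf.gradx_fhat_eq_zero_of_isMin hl (by linarith) ha,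
          add_sub_add_left_eq_sub, ← smul_sub, sub_sub_sub_cancel_left]
    _ = p * ‖z - z'‖ := by rw [norm_smul, Real.norm_of_nonneg (by linarith)]

theorem IsLSmooth.norm_sub_argmin_le (hf : IsLSmooth l f) (hl : 0 < l)
    {c z' : EuclideanSpace ℝ (Fin d1)} {y' : EuclideanSpace ℝ (Fin d2)}
    (ha : ∀ x, fhat f (2 * l) a y z ≤ fhat f (2 * l) x y z)
    (hb : ∀ x, fhat f (2 * l) b y' z ≤ fhat f (2 * l) x y' z)
    (hc : ∀ x, fhat f (2 * l) c y' z' ≤ fhat f (2 * l) x y' z') :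
    ‖a - c‖ ≤ ‖y - y'‖ + 2 * ‖z - z'‖ := by
  have hlp : l < 2 * l := by linarith
  have hab := hf.mul_norm_sub_argmin_le_dual hl.le hlp ha hb
  have hbc := hf.mul_norm_sub_argmin_le_center hl.le hlp hb hc
  rw [show 2 * l - l = l by ring] at hab hbc
  calc ‖a - c‖ ≤ ‖a - b‖ + ‖b - c‖ := norm_sub_le_norm_sub_add_norm_sub a b c
    _ ≤ ‖y - y'‖ + 2 * ‖z - z'‖ := add_le_add (le_of_mul_le_mul_left hab hl)
        (le_of_mul_le_mul_left (hbc.trans_eq (by ring)) hl)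

theorem IsLSmooth.le_fhat_sub_of_dual_step (hf : IsLSmooth l f) (hl : 0 ≤ l)
    (ha : ∀ x, fhat f p a y z ≤ fhat f p x y z) {η : ℝ} (hη : 0 ≤ η)
    (x b : EuclideanSpace ℝ (Fin d1)) :
    η * ‖grady f x y‖ ^ 2 - η * (l * ‖b - x‖) * ‖grady f x y‖ - l / 2 * η ^ 2 * ‖grady f x y‖ ^ 2
      ≤ fhat f p b (y + η • grady f x y) z - fhat f p a y z := by
  set g := grady f x y
  have hdesc := (abs_le.1 (hf.abs_fhat_sub_sub_le (p := p) hl b b z y (y + η • g))).1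
  simp only [sub_self, inner_zero_right, norm_zero, add_sub_cancel_left, real_inner_smul_right,
    norm_smul, Real.norm_eq_abs, mul_pow, sq_abs] at hdesc
  have hinner : ‖g‖ ^ 2 - l * ‖b - x‖ * ‖g‖ ≤ ⟪grady f b y, g⟫ := by
    have hcs := neg_le_of_abs_le (abs_real_inner_le_norm (grady f b y - g) g)
    have hlip := mul_le_mul_of_nonneg_right (hf.norm_grady_sub_le hl b x y) (norm_nonneg g)
    rw [inner_sub_left, real_inner_self_eq_norm_sq] at hcs
    linarith
  nlinarith [mul_le_mul_of_nonneg_left hinner hη, ha b]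

/-- With `a = x*(y, z)` and `b = x*(y', z)`, the right side is the change of `f̂ − 2Ψ` under the
`(x, y)`-step. -/
theorem IsLSmooth.le_sub_of_primal_dual_step (hf : IsLSmooth l f) (hl : 0 < l)
    (x : EuclideanSpace ℝ (Fin d1)) (ηx : ℝ) {ηy : ℝ} (hηy : 0 ≤ ηy)
    (ha : ∀ w, fhat f (2 * l) a y z ≤ fhat f (2 * l) w y z)
    (hb : ∀ w, fhat f (2 * l) b (y + ηy • grady f x y) z
      ≤ fhat f (2 * l) w (y + ηy • grady f x y) z) :
    ηx * ‖gradx f x y + (2 * l) • (x - z)‖ ^ 2 + ηy * ‖grady f x y‖ ^ 2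
        - 3 * l / 2 * ηx ^ 2 * ‖gradx f x y + (2 * l) • (x - z)‖ ^ 2
        - 7 / 2 * l * ηy ^ 2 * ‖grady f x y‖ ^ 2
        - 2 * ηy * ‖gradx f x y + (2 * l) • (x - z)‖ * ‖grady f x y‖
      ≤ (fhat f (2 * l) x y z - 2 * fhat f (2 * l) a y z)
        - (fhat f (2 * l) (x - ηx • (gradx f x y + (2 * l) • (x - z))) (y + ηy • grady f x y) z
          - 2 * fhat f (2 * l) b (y + ηy • grady f x y) z) := by
  set G := gradx f x y + (2 * l) • (x - z)
  set g := grady f x y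
  have hlp : l < 2 * l := by linarith
  have hprimal := hf.fhat_primal_dual_step_le (p := 2 * l) hl.le x z y ηx ηy
  have hdual := hf.le_fhat_sub_of_dual_step hl.le ha hηy x b
  have hxa := hf.mul_norm_sub_le_norm_gradx_fhat hl.le hlp ha x
  have hab := hf.mul_norm_sub_argmin_le_dual hl.le hlp ha hb
  rw [sub_add_cancel_left, norm_neg, norm_smul, Real.norm_of_nonneg hηy] at hab
  have hbx : l * ‖b - x‖ ≤ l * ηy * ‖g‖ + ‖G‖ := by
    have := norm_sub_le_norm_sub_add_norm_sub x a b
    rw [norm_sub_rev] at this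
    nlinarith
  nlinarith [mul_le_mul_of_nonneg_right (mul_le_mul_of_nonneg_left hbx hηy) (norm_nonneg g)]

/-- With `b = x*(y, z)`, `q = x*(y, z')`, `w = x*(z)` and `w' = x*(z')`, the right side is
`V(x', y, z) − V(x', y, z')` for the `z`-step `z' = z + β(x' − z)`. -/
theorem le_sub_of_center_step {β : ℝ} (hp : 0 ≤ p) (hβ : 0 ≤ β)
    {Φ : EuclideanSpace ℝ (Fin d1) → EuclideanSpace ℝ (Fin d1) → ℝ}
    (hΦ : ∀ x z, IsLUB (range fun y => fhat f p x y z) (Φ x z))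
    {x' w w' : EuclideanSpace ℝ (Fin d1)} (hb : ∀ x, fhat f p b y z ≤ fhat f p x y z)
    (hw' : ∀ x, Φ w' (z + β • (x' - z)) ≤ Φ x (z + β • (x' - z)))
    (q : EuclideanSpace ℝ (Fin d1)) :
    p / 2 * β * (2 - β) * ‖x' - z‖ ^ 2 - 2 * p * β * ‖w - q‖ * ‖x' - z‖
      ≤ (fhat f p x' y z - 2 * fhat f p b y z + 2 * Φ w z)
        - (fhat f p x' y (z + β • (x' - z)) - 2 * fhat f p q y (z + β • (x' - z))
          + 2 * Φ w' (z + β • (x' - z))) := by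
  set z' := z + β • (x' - z)
  have hmove : fhat f p x' y z' = f x' y + p / 2 * (1 - β) ^ 2 * ‖x' - z‖ ^ 2 :=
    fhat_center_step x' z y β
  have hstay : fhat f p x' y z = f x' y + p / 2 * ‖x' - z‖ ^ 2 := rfl
  have hΨ := fhat_center_sub (f := f) (p := p) q z z' y
  have hP := (hw' w).trans (fhat_isLUB_center_le (hΦ w z) (hΦ w z'))
  have hinner : -(β * (‖w - q‖ * ‖x' - z‖)) ≤ ⟪q - z, z - z'⟫ - ⟪w - z, z - z'⟫ := by
    rw [← inner_sub_left, sub_sub_sub_cancel_right, show z - z' = -(β • (x' - z)) by simp [z'],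
      inner_neg_right, real_inner_smul_right, norm_sub_rev w q, neg_le_neg_iff]
    exact mul_le_mul_of_nonneg_left (real_inner_le_norm _ _) hβ
  linarith [hb q, mul_le_mul_of_nonneg_left hinner hp]

end Smooth

theorem smoothedGDA_step_size_bound {l ηx ηy β A B C C' D E : ℝ} (hl : 0 < l) (hηx : 0 < ηx)
    (hηx' : l * ηx ≤ 1 / 1000) (hηy : ηy = ηx / 256) (hβ : 0 < β) (hβ' : β ≤ ηy * l / 80000)
    (hA : 0 ≤ A) (hC₀ : 0 ≤ C) (hC' : 0 ≤ C')
    (hE : E ≤ D + ηy * B + 2 * β * C') (hC : C ≤ C' + ηx * A) :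
    ηx / 32 * A ^ 2 + ηy / 32 * B ^ 2 + 2 * l * β / 16 * C ^ 2 - 24 * (2 * l) * β * D ^ 2
      ≤ ηx * A ^ 2 + ηy * B ^ 2 - 3 * l / 2 * ηx ^ 2 * A ^ 2 - 7 / 2 * l * ηy ^ 2 * B ^ 2
          - 2 * ηy * A * B + l * β * (2 - β) * C' ^ 2 - 4 * l * β * E * C' := by
  have hlβ : 0 ≤ l * β := by positivity
  have hηy₀ : 0 ≤ ηy := by rw [hηy]; positivity
  have hlηy : l * ηy ≤ 1 / 256000 := by rw [hηy]; linarith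
  have hβ1 : β ≤ 1 / 1000 := by nlinarith
  have hEC := mul_le_mul_of_nonneg_left (mul_le_mul_of_nonneg_right hE hC') hlβ
  have hCsq : C ^ 2 ≤ 2 * C' ^ 2 + 2 * (ηx * A) ^ 2 := by
    nlinarith [sq_nonneg (C' - ηx * A), mul_le_mul hC hC hC₀ (by positivity)]
  have hxA := mul_le_mul_of_nonneg_right hηx' (mul_nonneg hηx.le (sq_nonneg A))
  have hyB := mul_le_mul_of_nonneg_right hlηy (mul_nonneg hηy₀ (sq_nonneg B))
  have hβx := mul_le_mul_of_nonneg_right hβ1 (mul_nonneg hl.le (sq_nonneg (ηx * A)))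
  have hβy := mul_le_mul_of_nonneg_right hβ1 (mul_nonneg hl.le (sq_nonneg (ηy * B)))
  have hβC := mul_le_mul_of_nonneg_right hβ1 (mul_nonneg hlβ (sq_nonneg C'))
  -- AM–GM splittings of the cross terms `D C'`, `B C'` and `A B`
  have hDC := mul_nonneg hlβ (sq_nonneg (C' - 24 * D))
  have hBC := mul_nonneg hlβ (sq_nonneg (C' - 8 * ηy * B))
  have hAB := mul_nonneg hηy₀ (sq_nonneg (4 * A - B / 4))
  have hCC := mul_le_mul_of_nonneg_left hCsq hlβ
  have hA₂ := mul_nonneg hηx.le (sq_nonneg A)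
  have hB₂ := mul_nonneg hηy₀ (sq_nonneg B)
  have hC₂ := mul_nonneg hlβ (sq_nonneg C')
  subst hηy
  linarith

theorem statement13_general {d1 d2 : ℕ} (l ηx ηy β : ℝ) (hl : 0 < l)
    (hηx : 0 < ηx) (hηx' : ηx ≤ 1 / (1000 * l)) (hηy : ηy = ηx / 256)
    (hβ : 0 < β) (hβ' : β ≤ ηy * l / 80000)
    (f : EuclideanSpace ℝ (Fin d1) → EuclideanSpace ℝ (Fin d2) → ℝ)
    (hf : IsLSmooth l f)
    -- `x*(y, z)`: minimizer of `x ↦ f̂(x, y, z)` with `p = 2l`; `Ψ(y,z) = f̂(x*(y,z),y,z)`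
    (xstar : EuclideanSpace ℝ (Fin d2) → EuclideanSpace ℝ (Fin d1) → EuclideanSpace ℝ (Fin d1))
    (hxstar : ∀ y z x, fhat f (2 * l) (xstar y z) y z ≤ fhat f (2 * l) x y z)
    -- `Φ(x,z) = sup_{y} f̂(x,y,z)` is finite, with minimizer `x*(z)` in `x`
    (Φ : EuclideanSpace ℝ (Fin d1) → EuclideanSpace ℝ (Fin d1) → ℝ)
    (hΦ : ∀ x z, IsLUB (Set.range fun y => fhat f (2 * l) x y z) (Φ x z))
    (xstarz : EuclideanSpace ℝ (Fin d1) → EuclideanSpace ℝ (Fin d1))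
    (hxstarz : ∀ z x, Φ (xstarz z) z ≤ Φ x z)
    -- minimax regularity: `P(z) = sup_y Ψ(y,z)` is attained at `ŷ*(z)`,
    -- `P(z) = min_x Φ(x,z)` and `x*(ŷ*(z),z) = x*(z)`
    (P : EuclideanSpace ℝ (Fin d1) → ℝ)
    (hminimax : ∀ z, P z = Φ (xstarz z) z)
    -- one step of Smoothed-GDA
    (x z : EuclideanSpace ℝ (Fin d1)) (y : EuclideanSpace ℝ (Fin d2))
    (x' z' : EuclideanSpace ℝ (Fin d1)) (y' : EuclideanSpace ℝ (Fin d2))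
    (hx' : x' = x - ηx • (gradx f x y + (2 * l) • (x - z)))
    (hy' : y' = y + ηy • grady f x y)
    (hz' : z' = z + β • (x' - z)) :
    (fhat f (2 * l) x y z - 2 * fhat f (2 * l) (xstar y z) y z + 2 * P z)
        - (fhat f (2 * l) x' y' z' - 2 * fhat f (2 * l) (xstar y' z') y' z' + 2 * P z')
      ≥ ηx / 32 * ‖gradx f x y + (2 * l) • (x - z)‖ ^ 2
        + ηy / 32 * ‖grady f x y‖ ^ 2
        + (2 * l) * β / 16 * ‖x - z‖ ^ 2
        - 24 * (2 * l) * β * ‖xstarz z - xstar y z‖ ^ 2 := by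
  set G := gradx f x y + (2 * l) • (x - z)
  set g := grady f x y
  have hηy₀ : 0 ≤ ηy := by rw [hηy]; positivity
  have hxy := hf.le_sub_of_primal_dual_step hl x ηx hηy₀ (hxstar y z) (hy' ▸ hxstar y' z)
  have hcenter := le_sub_of_center_step (by positivity) hβ.le hΦ (hxstar y' z)
    (hz' ▸ hxstarz z') (xstar y' z') (w := xstarz z)
  rw [← hx', ← hy'] at hxy
  rw [← hz', ← hminimax, ← hminimax] at hcenter
  have hE : ‖xstarz z - xstar y' z'‖ ≤ ‖xstarz z - xstar y z‖ + ηy * ‖g‖ + 2 * β * ‖x' - z‖ := by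
    have hyy : ‖y - y'‖ = ηy * ‖g‖ := by
      rw [hy', sub_add_cancel_left, norm_neg, norm_smul, Real.norm_of_nonneg hηy₀]
    have hzz : ‖z - z'‖ = β * ‖x' - z‖ := by
      rw [hz', sub_add_cancel_left, norm_neg, norm_smul, Real.norm_of_nonneg hβ.le]
    have := hf.norm_sub_argmin_le hl (hxstar y z) (hxstar y' z) (hxstar y' z')
    rw [hyy, hzz] at this
    linarith [norm_sub_le_norm_sub_add_norm_sub (xstarz z) (xstar y z) (xstar y' z')]
  have hC : ‖x - z‖ ≤ ‖x' - z‖ + ηx * ‖G‖ := by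
    have hxx : ‖x - x'‖ = ηx * ‖G‖ := by
      rw [hx', sub_sub_cancel, norm_smul, Real.norm_of_nonneg hηx.le]
    linarith [norm_sub_le_norm_sub_add_norm_sub x x' z]
  have hlηx : l * ηx ≤ 1 / 1000 := by
    rw [le_div_iff₀ (by positivity)] at hηx'
    linarith
  have hstep := smoothedGDA_step_size_bound hl hηx hlηx hηy hβ hβ' (norm_nonneg G) (norm_nonneg (x - z))
    (norm_nonneg (x' - z)) hE hC
  linarith

/-- potential decrease, unconstrained case `Y = ℝ^{d2}`: with `p = 2l`,
`0 < η_x ≤ 1/(1000l)`, `η_y = η_x/256`, `0 < β ≤ η_y l/80000`, one step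
`x' = x − η_x(∇_x f(x,y) + p(x−z))`, `y' = y + η_y ∇_y f(x,y)`, `z' = z + β(x'−z)` of
Smoothed-GDA decreases the potential `V(x,y,z) = f̂(x,y,z) − 2Ψ(y,z) + 2P(z)` by
`(η_x/32)‖∇_x f̂(x,y,z)‖² + (η_y/32)‖∇_y f(x,y)‖² + (pβ/16)‖x−z‖² − 24pβ‖x*(z) − x*(y,z)‖²`. -/
theorem statement13 {d1 d2 : ℕ} (l ηx ηy β : ℝ) (hl : 0 < l)
    (hηx : 0 < ηx) (hηx' : ηx ≤ 1 / (1000 * l)) (hηy : ηy = ηx / 256)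
    (hβ : 0 < β) (hβ' : β ≤ ηy * l / 80000)
    (f : EuclideanSpace ℝ (Fin d1) → EuclideanSpace ℝ (Fin d2) → ℝ)
    (hf : IsLSmooth l f)
    -- `x*(y, z)`: minimizer of `x ↦ f̂(x, y, z)` with `p = 2l`; `Ψ(y,z) = f̂(x*(y,z),y,z)`
    (xstar : EuclideanSpace ℝ (Fin d2) → EuclideanSpace ℝ (Fin d1) → EuclideanSpace ℝ (Fin d1))
    (hxstar : ∀ y z x, fhat f (2 * l) (xstar y z) y z ≤ fhat f (2 * l) x y z)
    -- `Φ(x,z) = sup_{y} f̂(x,y,z)` is finite, with minimizer `x*(z)` in `x`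
    (Φ : EuclideanSpace ℝ (Fin d1) → EuclideanSpace ℝ (Fin d1) → ℝ)
    (hΦ : ∀ x z, IsLUB (Set.range fun y => fhat f (2 * l) x y z) (Φ x z))
    (xstarz : EuclideanSpace ℝ (Fin d1) → EuclideanSpace ℝ (Fin d1))
    (hxstarz : ∀ z x, Φ (xstarz z) z ≤ Φ x z)
    -- minimax regularity: `P(z) = sup_y Ψ(y,z)` is attained at `ŷ*(z)`,
    -- `P(z) = min_x Φ(x,z)` and `x*(ŷ*(z),z) = x*(z)`
    (P : EuclideanSpace ℝ (Fin d1) → ℝ)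
    (yhat : EuclideanSpace ℝ (Fin d1) → EuclideanSpace ℝ (Fin d2))
    (hP : ∀ z, IsLUB (Set.range fun y => fhat f (2 * l) (xstar y z) y z) (P z))
    (hyhat : ∀ z, fhat f (2 * l) (xstar (yhat z) z) (yhat z) z = P z)
    (hminimax : ∀ z, P z = Φ (xstarz z) z)
    (hxyhat : ∀ z, xstar (yhat z) z = xstarz z)
    -- one step of Smoothed-GDA
    (x z : EuclideanSpace ℝ (Fin d1)) (y : EuclideanSpace ℝ (Fin d2))
    (x' z' : EuclideanSpace ℝ (Fin d1)) (y' : EuclideanSpace ℝ (Fin d2))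
    (hx' : x' = x - ηx • (gradx f x y + (2 * l) • (x - z)))
    (hy' : y' = y + ηy • grady f x y)
    (hz' : z' = z + β • (x' - z)) :
    (fhat f (2 * l) x y z - 2 * fhat f (2 * l) (xstar y z) y z + 2 * P z)
        - (fhat f (2 * l) x' y' z' - 2 * fhat f (2 * l) (xstar y' z') y' z' + 2 * P z')
      ≥ ηx / 32 * ‖gradx f x y + (2 * l) • (x - z)‖ ^ 2
        + ηy / 32 * ‖grady f x y‖ ^ 2
        + (2 * l) * β / 16 * ‖x - z‖ ^ 2
        - 24 * (2 * l) * β * ‖xstarz z - xstar y z‖ ^ 2 :=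
  statement13_general l ηx ηy β hl hηx hηx' hηy hβ hβ' f hf xstar hxstar Φ hΦ xstarz hxstarz P
    hminimax x z y x' z' y' hx' hy' hz'
end
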